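/- arXiv:1802.08502 — 2 statements merged into one kernel-verified Lean document; each statement's English description precedes it below -/
import Mathlib

section
/- Let β > 0, Z(a) = Σ_{n=0}^{∞} (n + a)^{−(1+β)} for real a ≥ 1, R₁⁺ ∈ ℝ, and for t ≥ 2 let R_t⁺ = (1/t^{2+β}) · Z(1)/(Z(t)·Z(t+1)) · R₁⁺. Then lim_{t→∞} t^{2−β} · R_t⁺ = β²·Z(1)·R₁⁺; that is, R_t⁺ decays like a constant multiple of t^{−(2−β)}. -/
/-!
By the mean value theorem, `β (x+1)^{-(1+β)} ≤ x^{-β} - (x+1)^{-β} ≤ β x^{-(1+β)}` for `x > 0`.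
Summing these telescoping differences over `x = n + a` squeezes the Hurwitz zeta value:
`a^{-β}/β ≤ Z(a) ≤ a^{-(1+β)} + a^{-β}/β`, so `a^β Z(a) → 1/β`. Then
`t^{2-β} R_t⁺ = Z(1) R₁⁺ / ((t^β Z(t)) (t^β Z(t+1))) → β² Z(1) R₁⁺`.
-/

open Filter Real Topology

theorem rpow_neg_sub_rpow_neg_add_one_mem_Icc {β x : ℝ} (hβ : 0 ≤ β) (hx : 0 < x) :
    x ^ (-β) - (x + 1) ^ (-β) ∈ Set.Icc (β * (x + 1) ^ (-(1 + β))) (β * x ^ (-(1 + β))) := by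
  obtain ⟨c, ⟨hxc, hcx⟩, hc⟩ := exists_hasDerivAt_eq_slope (fun y : ℝ => y ^ (-β))
    (fun y => -β * y ^ (-β - 1)) (lt_add_one x)
    (continuousOn_id.rpow_const fun y hy => Or.inl (hx.trans_le hy.1).ne')
    (fun y hy => hasDerivAt_rpow_const (Or.inl (hx.trans hy.1).ne'))
  have hdiff : x ^ (-β) - (x + 1) ^ (-β) = β * c ^ (-(1 + β)) := by
    rw [add_sub_cancel_left, div_one, show -β - 1 = -(1 + β) by ring] at hc
    linarith
  have hexp : -(1 + β) ≤ 0 := by linarith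
  rw [hdiff]
  exact ⟨mul_le_mul_of_nonneg_left (rpow_le_rpow_of_nonpos (hx.trans hxc) hcx.le hexp) hβ,
    mul_le_mul_of_nonneg_left (rpow_le_rpow_of_nonpos hx hxc.le hexp) hβ⟩

noncomputable def hurwitzZetaReal (β a : ℝ) : ℝ := ∑' n : ℕ, ((n : ℝ) + a) ^ (-(1 + β))

section Bounds

variable {β a : ℝ}

theorem rpow_neg_sub_rpow_neg_succ_mem_Icc (hβ : 0 ≤ β) (ha : 0 < a) (n : ℕ) :
    ((n : ℝ) + a) ^ (-β) - ((n : ℝ) + 1 + a) ^ (-β) ∈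
      Set.Icc (β * (((n + 1 : ℕ) : ℝ) + a) ^ (-(1 + β))) (β * ((n : ℝ) + a) ^ (-(1 + β))) := by
  rw [Nat.cast_succ, add_right_comm]
  exact rpow_neg_sub_rpow_neg_add_one_mem_Icc hβ (by positivity)

theorem hasSum_rpow_neg_sub_rpow_neg_succ (hβ : 0 < β) (ha : 0 < a) :
    HasSum (fun n : ℕ => ((n : ℝ) + a) ^ (-β) - ((n : ℝ) + 1 + a) ^ (-β)) (a ^ (-β)) := by
  have hlim : Tendsto (fun n : ℕ => ((n : ℝ) + a) ^ (-β)) atTop (𝓝 0) :=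
    (tendsto_rpow_neg_atTop hβ).comp (tendsto_atTop_add_const_right _ a tendsto_natCast_atTop_atTop)
  refine (hasSum_iff_tendsto_nat_of_nonneg (fun n => ?_) _).2 ?_
  · exact (mul_nonneg hβ.le (by positivity)).trans (rpow_neg_sub_rpow_neg_succ_mem_Icc hβ.le ha n).1
  · have := Finset.sum_range_sub' (fun n : ℕ => ((n : ℝ) + a) ^ (-β))
    push_cast at this
    simpa [this] using tendsto_const_nhds.sub hlim

theorem summable_rpow_neg_add (hβ : 0 < β) (ha : 0 < a) :
    Summable fun n : ℕ => ((n : ℝ) + a) ^ (-(1 + β)) := by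
  refine (summable_nat_add_iff 1).mp <| .of_nonneg_of_le (fun n => by positivity) (fun n => ?_)
    ((hasSum_rpow_neg_sub_rpow_neg_succ hβ ha).summable.div_const β)
  rw [le_div_iff₀ hβ, mul_comm]
  exact (rpow_neg_sub_rpow_neg_succ_mem_Icc hβ.le ha n).1

theorem rpow_neg_div_le_hurwitzZetaReal (hβ : 0 < β) (ha : 0 < a) :
    a ^ (-β) / β ≤ hurwitzZetaReal β a := by
  rw [div_le_iff₀ hβ, hurwitzZetaReal, ← tsum_mul_right,
    ← (hasSum_rpow_neg_sub_rpow_neg_succ hβ ha).tsum_eq]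
  exact Summable.tsum_le_tsum
    (fun n => by linarith [(rpow_neg_sub_rpow_neg_succ_mem_Icc hβ.le ha n).2])
    (hasSum_rpow_neg_sub_rpow_neg_succ hβ ha).summable
    ((summable_rpow_neg_add hβ ha).mul_right β)

theorem hurwitzZetaReal_le (hβ : 0 < β) (ha : 0 < a) :
    hurwitzZetaReal β a ≤ a ^ (-(1 + β)) + a ^ (-β) / β := by
  have htail : ∑' n : ℕ, (((n + 1 : ℕ) : ℝ) + a) ^ (-(1 + β)) ≤ a ^ (-β) / β := by
    rw [le_div_iff₀ hβ, ← tsum_mul_right, ← (hasSum_rpow_neg_sub_rpow_neg_succ hβ ha).tsum_eq]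
    exact Summable.tsum_le_tsum
      (fun n => by linarith [(rpow_neg_sub_rpow_neg_succ_mem_Icc hβ.le ha n).1])
      (((summable_nat_add_iff 1).mpr (summable_rpow_neg_add hβ ha)).mul_right β)
      (hasSum_rpow_neg_sub_rpow_neg_succ hβ ha).summable
  rw [hurwitzZetaReal, (summable_rpow_neg_add hβ ha).tsum_eq_zero_add]
  simpa using htail

end Bounds

theorem tendsto_rpow_mul_hurwitzZetaReal {β : ℝ} (hβ : 0 < β) :
    Tendsto (fun a : ℝ => a ^ β * hurwitzZetaReal β a) atTop (𝓝 β⁻¹) := by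
  have hupper : Tendsto (fun a : ℝ => a⁻¹ + β⁻¹) atTop (𝓝 β⁻¹) := by
    simpa using tendsto_inv_atTop_zero.add_const β⁻¹
  refine tendsto_of_tendsto_of_tendsto_of_le_of_le' tendsto_const_nhds hupper ?_ ?_ <;>
    filter_upwards [eventually_gt_atTop 0] with a ha
  · calc β⁻¹ = a ^ β * (a ^ (-β) / β) := by
          rw [rpow_neg ha.le, mul_div_assoc', mul_inv_cancel₀ (rpow_pos_of_pos ha β).ne', one_div]
      _ ≤ a ^ β * hurwitzZetaReal β a :=
          mul_le_mul_of_nonneg_left (rpow_neg_div_le_hurwitzZetaReal hβ ha) (by positivity)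
  · calc a ^ β * hurwitzZetaReal β a ≤ a ^ β * (a ^ (-(1 + β)) + a ^ (-β) / β) :=
          mul_le_mul_of_nonneg_left (hurwitzZetaReal_le hβ ha) (by positivity)
      _ = a⁻¹ + β⁻¹ := by
          rw [mul_add, ← rpow_add ha, mul_div_assoc', ← rpow_add ha]
          norm_num [rpow_neg_one]

theorem tendsto_natCast_rpow_mul_hurwitzZetaReal_succ {β : ℝ} (hβ : 0 < β) :
    Tendsto (fun t : ℕ => (t : ℝ) ^ β * hurwitzZetaReal β ((t : ℝ) + 1)) atTop (𝓝 β⁻¹) := by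
  have hshift : Tendsto (fun t : ℕ => ((t : ℝ) + 1) ^ β * hurwitzZetaReal β ((t : ℝ) + 1))
      atTop (𝓝 β⁻¹) := by
    have := (tendsto_rpow_mul_hurwitzZetaReal hβ).comp tendsto_natCast_atTop_atTop
    simpa using (tendsto_add_atTop_iff_nat 1).mpr this
  have hratio : Tendsto (fun t : ℕ => ((t : ℝ) / ((t : ℝ) + 1)) ^ β) atTop (𝓝 1) := by
    simpa using (tendsto_natCast_div_add_atTop (1 : ℝ)).rpow_const (Or.inr hβ.le)
  refine (one_mul β⁻¹ ▸ hratio.mul hshift).congr' ?_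
  filter_upwards [eventually_gt_atTop 0] with t ht
  rw [← mul_assoc, ← mul_rpow (by positivity) (by positivity), div_mul_cancel₀ _ (by positivity)]

/-- The incremental impact
`R_t⁺ = (1/t^{2+β})·Z(1)/(Z(t)·Z(t+1))·R₁⁺` satisfies
`lim_{t→∞} t^{2−β}·R_t⁺ = β²·Z(1)·R₁⁺`, i.e. `R_t⁺` decays like a constant
multiple of `t^{−(2−β)}`. -/
theorem stmt_13 (β : ℝ) (hβ : 0 < β)
    (Z : ℝ → ℝ)
    (hZ : ∀ a : ℝ, 1 ≤ a → Z a = ∑' n : ℕ, ((n : ℝ) + a) ^ (-(1 + β)))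
    (R₁ : ℝ) (Rp : ℕ → ℝ)
    (hRp : ∀ t : ℕ, 2 ≤ t →
      Rp t = (1 / (t : ℝ) ^ (2 + β)) * (Z 1 / (Z t * Z ((t : ℝ) + 1))) * R₁) :
    Filter.Tendsto (fun t : ℕ => (t : ℝ) ^ (2 - β) * Rp t)
      Filter.atTop (nhds (β ^ 2 * Z 1 * R₁)) := by
  have hZt : Tendsto (fun t : ℕ => (t : ℝ) ^ β * Z t) atTop (𝓝 β⁻¹) := by
    refine ((tendsto_rpow_mul_hurwitzZetaReal hβ).comp tendsto_natCast_atTop_atTop).congr' ?_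
    filter_upwards [eventually_ge_atTop 1] with t ht
    simp [hurwitzZetaReal, hZ t (mod_cast ht)]
  have hZt1 : Tendsto (fun t : ℕ => (t : ℝ) ^ β * Z ((t : ℝ) + 1)) atTop (𝓝 β⁻¹) := by
    refine (tendsto_natCast_rpow_mul_hurwitzZetaReal_succ hβ).congr fun t => ?_
    rw [hurwitzZetaReal, hZ _ (by simp)]
  have hlim := ((hZt.mul hZt1).inv₀ (by positivity)).const_mul (Z 1 * R₁)
  rw [← mul_inv, inv_inv, show Z 1 * R₁ * (β * β) = β ^ 2 * Z 1 * R₁ by ring] at hlim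
  refine hlim.congr' ?_
  filter_upwards [eventually_ge_atTop 2] with t ht
  have ht0 : (0 : ℝ) < t := by positivity
  have hpow : (t : ℝ) ^ (2 - β) * (1 / (t : ℝ) ^ (2 + β)) = ((t : ℝ) ^ β)⁻¹ * ((t : ℝ) ^ β)⁻¹ := by
    rw [one_div, ← rpow_neg ht0.le, ← rpow_add ht0, ← rpow_neg ht0.le, ← rpow_add ht0]
    ring_nf
  rw [hRp t ht]
  linear_combination -(Z 1 / (Z t * Z ((t : ℝ) + 1)) * R₁) * hpow
end

section
/- Let β = 1, Z(a) = Σ_{n=0}^{∞} (n + a)^{−2} for real a ≥ 1, R₀⁺ ∈ ℝ, R₁⁺ > 0, and for k ≥ 2 let R_k⁺ = (1/k³) · Z(1)/(Z(k)·Z(k+1)) · R₁⁺. Define 𝓘_t = R₀⁺ + R₁⁺ + Σ_{k=2}^{t−1} R_k⁺. Then lim_{t→∞} 𝓘_t / log t = Z(1)·R₁⁺ = ζ(2)·R₁⁺; in particular 𝓘_t grows logarithmically. -/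
/-!
Squeezing `(n + c)⁻²` between the telescoping terms `1/(n+c) - 1/(n+c+1)` and
`1/(n+c-1) - 1/(n+c)` gives `1/c ≤ Z c ≤ 1/(c-1)`, hence `k² Z(k) Z(k+1) = 1 + O(1/k)` and
`R_k⁺ = Z(1) R₁⁺ / k + O(1/k²)`. Summing, `𝓘_t = Z(1) R₁⁺ (H_{t-1} - 1) + O(1)`, and the
harmonic numbers satisfy `log t ≤ H_{t-1} ≤ 1 + log t`; finally `Z 1 = ζ(2) = π²/6`.
-/

open Filter Real Finset Asymptotics Topology

theorem hasSum_sub_succ_of_antitone {f : ℕ → ℝ} (hf : Antitone f)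
    (h0 : Tendsto f atTop (𝓝 0)) : HasSum (fun n ↦ f n - f (n + 1)) (f 0) := by
  refine (hasSum_iff_tendsto_nat_of_nonneg (fun n ↦ sub_nonneg.2 (hf n.le_succ)) _).2 ?_
  simp_rw [sum_range_sub']
  simpa using tendsto_const_nhds.sub h0

theorem inv_sub_inv_add_one_le_inv_sq {x : ℝ} (hx : 0 < x) : x⁻¹ - (x + 1)⁻¹ ≤ (x ^ 2)⁻¹ := by
  rw [inv_sub_inv hx.ne' (by positivity), add_sub_cancel_left, ← one_div,
    one_div_le_one_div (by positivity) (by positivity)]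
  nlinarith

theorem inv_sq_le_inv_sub_one_sub_inv {x : ℝ} (hx : 1 < x) : (x ^ 2)⁻¹ ≤ (x - 1)⁻¹ - x⁻¹ := by
  rw [inv_sub_inv (by linarith) (by linarith), sub_sub_cancel, ← one_div,
    one_div_le_one_div (by positivity) (by nlinarith)]
  nlinarith

theorem hasSum_inv_add_sub_inv_add_one {c : ℝ} (hc : 0 < c) :
    HasSum (fun n : ℕ ↦ ((n : ℝ) + c)⁻¹ - ((n : ℝ) + c + 1)⁻¹) c⁻¹ := by
  have hanti : Antitone (fun n : ℕ ↦ ((n : ℝ) + c)⁻¹) := fun m n hmn ↦ by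
    dsimp only
    gcongr
  have h0 : Tendsto (fun n : ℕ ↦ ((n : ℝ) + c)⁻¹) atTop (𝓝 0) :=
    (tendsto_atTop_add_const_right _ c tendsto_natCast_atTop_atTop).inv_tendsto_atTop
  simpa [add_right_comm] using hasSum_sub_succ_of_antitone hanti h0

theorem tsum_inv_add_sq_mem_Icc {c : ℝ} (hc : 1 < c) :
    ∑' n : ℕ, (((n : ℝ) + c) ^ 2)⁻¹ ∈ Set.Icc c⁻¹ (c - 1)⁻¹ := by
  have hlo := hasSum_inv_add_sub_inv_add_one (c := c) (by linarith)
  have hup := hasSum_inv_add_sub_inv_add_one (c := c - 1) (by linarith)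
  have hle_lo (n : ℕ) : ((n : ℝ) + c)⁻¹ - ((n : ℝ) + c + 1)⁻¹ ≤ (((n : ℝ) + c) ^ 2)⁻¹ :=
    inv_sub_inv_add_one_le_inv_sq (by positivity)
  have hle_up (n : ℕ) :
      (((n : ℝ) + c) ^ 2)⁻¹ ≤ ((n : ℝ) + (c - 1))⁻¹ - ((n : ℝ) + (c - 1) + 1)⁻¹ := by
    have hx : 1 < (n : ℝ) + c := by linarith [n.cast_nonneg (α := ℝ)]
    convert inv_sq_le_inv_sub_one_sub_inv hx using 2 <;> ring
  have hsum : Summable (fun n : ℕ ↦ (((n : ℝ) + c) ^ 2)⁻¹) :=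
    hup.summable.of_nonneg_of_le (fun n ↦ by positivity) hle_up
  exact ⟨hlo.tsum_eq ▸ hlo.summable.tsum_le_tsum hle_lo hsum,
    hup.tsum_eq ▸ hsum.tsum_le_tsum hle_up hup.summable⟩

theorem abs_inv_mul_sub_inv_le {k a b : ℝ} (hk : 1 < k) (ha : a ∈ Set.Icc k⁻¹ (k - 1)⁻¹)
    (hb : b ∈ Set.Icc (k + 1)⁻¹ k⁻¹) : |(k ^ 3 * (a * b))⁻¹ - k⁻¹| ≤ (k ^ 2)⁻¹ := by
  have hk0 : 0 < k := by linarith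
  have ha0 : 0 < a := lt_of_lt_of_le (by positivity) ha.1
  have hb0 : 0 < b := lt_of_lt_of_le (by positivity) hb.1
  have hlo : (k - 1) * k ≤ (a * b)⁻¹ := le_inv_of_le_inv₀ (by positivity) <| by
    rw [mul_inv]
    exact mul_le_mul ha.2 hb.2 hb0.le (by simp [hk.le])
  have hup : (a * b)⁻¹ ≤ k * (k + 1) := inv_le_of_inv_le₀ (by positivity) <| by
    rw [mul_inv]
    exact mul_le_mul ha.1 hb.1 (by positivity) ha0.le
  calc |(k ^ 3 * (a * b))⁻¹ - k⁻¹| = |(a * b)⁻¹ - k ^ 2| / k ^ 3 := by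
        rw [← abs_of_pos (pow_pos hk0 3), ← abs_div, abs_of_pos (pow_pos hk0 3)]
        congr 1
        field_simp
    _ ≤ k / k ^ 3 := by
        gcongr
        rw [abs_sub_le_iff]
        constructor <;> nlinarith
    _ = (k ^ 2)⁻¹ := by field_simp

theorem sum_Icc_two_inv_add_one {n : ℕ} (hn : 1 ≤ n) :
    ∑ k ∈ Icc 2 n, (k : ℝ)⁻¹ + 1 = harmonic n := by
  rw [harmonic_eq_sum_Icc, ← insert_Icc_add_one_left_eq_Icc hn, sum_insert (by simp)]
  push_cast
  ring

theorem abs_sum_Icc_two_inv_sub_log_le (n : ℕ) :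
    |∑ k ∈ Icc 2 n, (k : ℝ)⁻¹ - log (n + 1)| ≤ 1 := by
  rcases Nat.eq_zero_or_pos n with rfl | hn
  · simp
  have hsum := sum_Icc_two_inv_add_one hn
  have hlo := log_add_one_le_harmonic n
  have hup := harmonic_le_one_add_log n
  have hlog : log n ≤ log (n + 1) := log_le_log (by positivity) (by linarith)
  push_cast at hlo
  rw [abs_le]
  constructor <;> linarith

theorem isBigO_sum_Icc_sub_mul_log {f : ℕ → ℝ} {d C : ℝ}
    (hf : ∀ k, 2 ≤ k → |f k - d / k| ≤ C / k ^ 2) :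
    (fun n : ℕ ↦ ∑ k ∈ Icc 2 n, f k - d * log (n + 1)) =O[atTop] (fun _ ↦ (1 : ℝ)) := by
  have hsplit (n : ℕ) : ∑ k ∈ Icc 2 n, f k - d * log (n + 1) =
      ∑ k ∈ Icc 2 n, (f k - d / k) + d * (∑ k ∈ Icc 2 n, (k : ℝ)⁻¹ - log (n + 1)) := by
    rw [sum_sub_distrib, mul_sub, mul_sum]
    simp only [div_eq_mul_inv]
    ring
  have herr (n : ℕ) : |∑ k ∈ Icc 2 n, (f k - d / k)| ≤ |C| * (π ^ 2 / 6) :=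
    calc |∑ k ∈ Icc 2 n, (f k - d / k)| ≤ ∑ k ∈ Icc 2 n, |C| * (1 / (k : ℝ) ^ 2) := by
          refine (abs_sum_le_sum_abs _ _).trans (sum_le_sum fun k hk ↦ ?_)
          refine (hf k (mem_Icc.1 hk).1).trans ?_
          rw [mul_one_div]
          gcongr
          exact le_abs_self C
      _ ≤ |C| * (π ^ 2 / 6) := by
          rw [← mul_sum]
          gcongr
          exact sum_le_hasSum _ (fun k _ ↦ by positivity) hasSum_zeta_two
  simp_rw [hsplit]
  refine IsBigO.add (IsBigO.of_bound (|C| * (π ^ 2 / 6)) (Eventually.of_forall fun n ↦ ?_))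
    ((IsBigO.of_bound 1 (Eventually.of_forall fun n ↦ ?_)).const_mul_left d)
  · simpa using herr n
  · simpa using abs_sum_Icc_two_inv_sub_log_le n

theorem tendsto_div_of_isBigO_sub_mul {α : Type*} {l : Filter α} {u g : α → ℝ} {d : ℝ}
    (hg : Tendsto g l atTop) (h : (fun x ↦ u x - d * g x) =O[l] (fun _ ↦ (1 : ℝ))) :
    Tendsto (fun x ↦ u x / g x) l (𝓝 d) := by
  have hlittle : (fun x ↦ u x - d * g x) =o[l] g :=
    h.trans_isLittleO ((isLittleO_one_left_iff ℝ).2 (tendsto_norm_atTop_atTop.comp hg))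
  have := hlittle.tendsto_div_nhds_zero.add_const d
  rw [zero_add] at this
  refine this.congr' ?_
  filter_upwards [hg.eventually_ne_atTop 0] with x hx
  field_simp
  ring

theorem tsum_inv_nat_add_one_sq : ∑' n : ℕ, (((n : ℝ) + 1) ^ 2)⁻¹ = π ^ 2 / 6 := by
  simpa using ((hasSum_nat_add_iff' 1).2 hasSum_zeta_two).tsum_eq

theorem stmt_15_general
    (Z : ℝ → ℝ)
    (hZ : ∀ a : ℝ, 1 ≤ a → Z a = ∑' n : ℕ, ((n : ℝ) + a) ^ (-(2 : ℝ)))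
    (R₀ R₁ : ℝ) (Rp : ℕ → ℝ)
    (hRp : ∀ k : ℕ, 2 ≤ k →
      Rp k = (1 / (k : ℝ) ^ 3) * (Z 1 / (Z k * Z ((k : ℝ) + 1))) * R₁)
    (I : ℕ → ℝ)
    (hI : ∀ t : ℕ, I t = R₀ + R₁ + ∑ k ∈ Finset.Icc 2 (t - 1), Rp k) :
    Filter.Tendsto (fun t : ℕ => I t / Real.log t)
        Filter.atTop (nhds (Z 1 * R₁)) ∧
      Z 1 = Real.pi ^ 2 / 6 := by
  have hZ' (a : ℝ) (ha : 1 ≤ a) : Z a = ∑' n : ℕ, (((n : ℝ) + a) ^ 2)⁻¹ := by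
    rw [hZ a ha]
    exact tsum_congr fun n ↦ by rw [rpow_neg (by positivity), rpow_two]
  set d := Z 1 * R₁
  have hRp_near (k : ℕ) (hk : 2 ≤ k) : |Rp k - d / k| ≤ |d| / (k : ℝ) ^ 2 := by
    have hk1 : (1 : ℝ) < k := by exact_mod_cast hk
    have hZk : Z k ∈ Set.Icc (k : ℝ)⁻¹ ((k : ℝ) - 1)⁻¹ :=
      hZ' k hk1.le ▸ tsum_inv_add_sq_mem_Icc hk1
    have hZk1 : Z ((k : ℝ) + 1) ∈ Set.Icc ((k : ℝ) + 1)⁻¹ (k : ℝ)⁻¹ := by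
      have h := tsum_inv_add_sq_mem_Icc (c := k + 1) (by linarith)
      rwa [add_sub_cancel_right, ← hZ' (k + 1) (by linarith)] at h
    have hZk0 : Z k ≠ 0 := (lt_of_lt_of_le (by positivity) hZk.1).ne'
    have hZk10 : Z ((k : ℝ) + 1) ≠ 0 := (lt_of_lt_of_le (by positivity) hZk1.1).ne'
    have heq : Rp k - d / k = d * (((k : ℝ) ^ 3 * (Z k * Z ((k : ℝ) + 1)))⁻¹ - (k : ℝ)⁻¹) := by
      rw [hRp k hk]
      field_simp
      ring
    rw [heq, abs_mul, div_eq_mul_inv]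
    exact mul_le_mul_of_nonneg_left (abs_inv_mul_sub_inv_le hk1 hZk hZk1) (abs_nonneg d)
  have hI_sub : (fun t : ℕ ↦ I t - d * log t) =O[atTop] (fun _ ↦ (1 : ℝ)) := by
    refine ((isBigO_const_const (R₀ + R₁) one_ne_zero atTop).add
      ((isBigO_sum_Icc_sub_mul_log hRp_near).comp_tendsto (tendsto_sub_atTop_nat 1))).congr' ?_
      EventuallyEq.rfl
    filter_upwards [eventually_ge_atTop 1] with t ht
    simp only [Function.comp_apply, Nat.cast_sub ht, Nat.cast_one, sub_add_cancel, hI]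
    ring
  exact ⟨tendsto_div_of_isBigO_sub_mul (tendsto_log_atTop.comp tendsto_natCast_atTop_atTop) hI_sub,
    (hZ' 1 le_rfl).trans tsum_inv_nat_add_one_sq⟩

/-- In the boundary case `β = 1`, with
`Z a = ∑_{n≥0} (n+a)^{−2}`, the immediate impact
`𝓘_t = R₀⁺ + R₁⁺ + ∑_{k=2}^{t−1} R_k⁺` with
`R_k⁺ = (1/k³)·Z(1)/(Z(k)·Z(k+1))·R₁⁺` grows logarithmically:
`lim_{t→∞} 𝓘_t / log t = Z(1)·R₁⁺ = ζ(2)·R₁⁺` (with `ζ(2) = π²/6`). -/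
theorem stmt_15
    (Z : ℝ → ℝ)
    (hZ : ∀ a : ℝ, 1 ≤ a → Z a = ∑' n : ℕ, ((n : ℝ) + a) ^ (-(2 : ℝ)))
    (R₀ R₁ : ℝ) (hR₁ : 0 < R₁) (Rp : ℕ → ℝ)
    (hRp : ∀ k : ℕ, 2 ≤ k →
      Rp k = (1 / (k : ℝ) ^ 3) * (Z 1 / (Z k * Z ((k : ℝ) + 1))) * R₁)
    (I : ℕ → ℝ)
    (hI : ∀ t : ℕ, I t = R₀ + R₁ + ∑ k ∈ Finset.Icc 2 (t - 1), Rp k) :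
    Filter.Tendsto (fun t : ℕ => I t / Real.log t)
        Filter.atTop (nhds (Z 1 * R₁)) ∧
      Z 1 = Real.pi ^ 2 / 6 :=
  stmt_15_general Z hZ R₀ R₁ Rp hRp I hI
end
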